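/- arXiv:1105.2437 — 2 statements merged into one kernel-verified Lean document; each statement's English description precedes it below -/
import Mathlib

section
/- Under the triangle inequality for setups, skipping inactive event points preserves setup feasibility: if T^s_{u,n+1} ≥ T^f_{q,n} + s(q,u) for all consecutive pairs with both active, and machine l is idle at intermediate event points, then for active technologies q at event point n̄ and u at event point n > n̄ with l idle strictly between, T^s_{u,n} ≥ T^f_{q,n̄} + s(q,u) follows from chaining the consecutive constraints through the triangle inequality—provided also T^s at each event point is ≥ T^f of the previous active technology. -/
/-- Under the triangle inequality for setups, skipping idle event points preserves setup
feasibility: if the setup constraint holds between consecutive active occurrences on a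
machine, then it holds between any two active occurrences. -/
theorem setup_feasibility_skipping_idle
    {τ : Type*} (s : τ → τ → ℝ)
    (hs : ∀ u q, 0 ≤ s u q)
    (htri : ∀ q p u : τ, s q u ≤ s q p + s p u)
    (tech : ℕ → Option τ)  -- active technology of machine `l` at each event point
    (Ts Tf : ℕ → ℝ)
    (hdur : ∀ n u, tech n = some u → Ts n ≤ Tf n)
    -- consecutive active occurrences satisfy the setup constraint
    (hconsec : ∀ n m q u, n < m → tech n = some q → tech m = some u →
        (∀ j, n < j → j < m → tech j = none) → Tf n + s q u ≤ Ts m) :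
    ∀ n' n q u, n' < n → tech n' = some q → tech n = some u →
      Tf n' + s q u ≤ Ts n := by
  suffices H : ∀ d n' n q u, n - n' ≤ d → n' < n → tech n' = some q → tech n = some u →
      Tf n' + s q u ≤ Ts n from
    fun n' n q u h1 h2 h3 => H (n - n') n' n q u le_rfl h1 h2 h3
  intro d
  induction d with
  | zero => intro n' n q u hd hlt _ _; omega
  | succ d ih =>
    intro n' n q u hd hlt hq hu
    by_cases hex : ∃ j, n' < j ∧ j < n ∧ (tech j).isSome
    · obtain ⟨j, hj1, hj2, hj3⟩ := hex
      obtain ⟨p, hp⟩ := Option.isSome_iff_exists.mp hj3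
      have h1 : Tf n' + s q p ≤ Ts j := ih n' j q p (by omega) hj1 hq hp
      have h2 : Tf j + s p u ≤ Ts n := ih j n p u (by omega) hj2 hp hu
      have h3 : Ts j ≤ Tf j := hdur j p hp
      linarith [htri q p u]
    · push_neg at hex
      exact hconsec n' n q u hlt hq hu fun j h1 h2 => by
        have := hex j h1 h2
        cases h : tech j with
        | none => rfl
        | some v => exact absurd (by rw [h]; rfl) this
end

section
/- Lower bound via machine load: for any feasible schedule and any machine l ∈ L, if for product i every technology in U_i uses machine l, then machine l is busy for at least min_{u∈U_i} V_i/a_u time on product i, and these busy times for different such products are disjoint, so C_max ≥ ∑_{i : ∀u∈U_i, l∈M_u} min_{u∈U_i} V_i / a_u. -/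
/-- Lower bound on the makespan via machine load: if every technology of product `i`
uses machine `l` (i.e. `Ui i ⊆ K l`), then machine `l` is busy at least
`V i / max_{u ∈ Ui i} a u` on product `i`; summing over such products (whose technology
sets are pairwise disjoint) gives `C ≥ ∑_{i ∈ I_l} V i / max_{u ∈ Ui i} a u`. -/
theorem makespan_ge_machine_load
    {τ ι : Type*} [DecidableEq τ] [Fintype ι] [DecidableEq ι]
    (K : Finset τ)                           -- technologies using machine l
    (Ui : ι → Finset τ) (hUi : ∀ i, (Ui i).Nonempty)
    (hpairwise : ∀ i j : ι, i ≠ j → Disjoint (Ui i) (Ui j))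
    (a : τ → ℝ) (ha : ∀ u, 0 < a u)
    (V : ι → ℝ) (hV : ∀ i, 0 < V i)
    (d : τ → ℝ) (hd : ∀ u, 0 ≤ d u)
    (C : ℝ)
    (hload : ∑ u ∈ K, d u ≤ C)
    (hvol : ∀ i, V i ≤ ∑ u ∈ Ui i, a u * d u)
    (Il : Finset ι) (hIl : ∀ i ∈ Il, Ui i ⊆ K) :
    (∀ i ∈ Il, V i / (Ui i).sup' (hUi i) a ≤ ∑ u ∈ Ui i, d u) ∧
    (∑ i ∈ Il, V i / (Ui i).sup' (hUi i) a) ≤ C := by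
  have hsup : ∀ i, 0 < (Ui i).sup' (hUi i) a := fun i => by
    obtain ⟨u, hu⟩ := hUi i
    exact lt_of_lt_of_le (ha u) (Finset.le_sup' a hu)
  have h1 : ∀ i ∈ Il, V i / (Ui i).sup' (hUi i) a ≤ ∑ u ∈ Ui i, d u := by
    intro i _
    rw [div_le_iff₀ (hsup i)]
    calc V i ≤ ∑ u ∈ Ui i, a u * d u := hvol i
    _ ≤ ∑ u ∈ Ui i, (Ui i).sup' (hUi i) a * d u := by
        apply Finset.sum_le_sum
        intro u hu
        exact mul_le_mul_of_nonneg_right (Finset.le_sup' a hu) (hd u)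
    _ = (∑ u ∈ Ui i, d u) * (Ui i).sup' (hUi i) a := by
        rw [← Finset.mul_sum, mul_comm]
  refine ⟨h1, ?_⟩
  calc ∑ i ∈ Il, V i / (Ui i).sup' (hUi i) a ≤ ∑ i ∈ Il, ∑ u ∈ Ui i, d u :=
        Finset.sum_le_sum h1
  _ = ∑ u ∈ Il.biUnion Ui, d u :=
        (Finset.sum_biUnion (fun i _ j _ hij => hpairwise i j hij)).symm
  _ ≤ ∑ u ∈ K, d u :=
        Finset.sum_le_sum_of_subset_of_nonneg (Finset.biUnion_subset.mpr hIl)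
          (fun u _ _ => hd u)
  _ ≤ C := hload
end
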